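/- arXiv:1012.5057 — 3 statements merged into one kernel-verified Lean document; each statement's English description precedes it below -/
import Mathlib

section
/- Under these hypotheses one has the identity (a_1 a_2 − p_{12} a_2 a_1)·(b_2 b_1 − p_{12}^{−1} b_1 b_2) − p_{11} p_{12} p_{21} p_{22} · (b_2 b_1 − p_{12}^{−1} b_1 b_2)·(a_1 a_2 − p_{12} a_2 a_1) = (1 − p_{12} p_{21})·(1 − h_1 h_2). (This is the identity [[x_1,x_2],[x_2^−,x_1^−]] = (1 − p_{12}p_{21})(1 − g_1 g_2 f_1 f_2) of Lemma 2.3 in the algebra 𝔉_n.) -/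
/-!
Write `[x, y]_c = x y - c y x`. A q-commutator with a q-commutator obeys a twisted Leibniz rule:
if `[x, y]_α = u` and `[x, z]_β = v`, then `[x, [y, z]_c]_{αβ}` is an explicit expression in
`u` and `v`, and symmetrically in the first slot. With `Y = [b₂, b₁]_{p₁₂⁻¹}` the defining
relations give `[a₁, Y]_{p₂₁p₁₁} = (p₂₁ - p₁₂⁻¹) b₂` and `[a₂, Y]_{p₂₂p₁₂} = (1 - p₂₁p₁₂) b₁ h₂`.
One more application, to `X = [a₁, a₂]_{p₁₂}` and `Y`, leaves a remainder that the relations for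
`a₁ b₁`, `a₂ b₂` and `h₂ a₁` collapse to `(1 - p₁₂p₂₁)(1 - h₁h₂)`.
-/

section

variable {R A : Type*} [CommRing R] [Ring A] [Algebra R A]

def qComm (c : R) (x y : A) : A := x * y - c • (y * x)

theorem mul_eq_of_qComm_eq {c : R} {x y w : A} (h : qComm c x y = w) :
    x * y = c • (y * x) + w :=
  sub_eq_iff_eq_add'.mp h

theorem qComm_qComm_right {α β c : R} {x y z u v : A}
    (hy : qComm α x y = u) (hz : qComm β x z = v) :
    qComm (α * β) x (qComm c y z) = α • (y * v) + u * z - c • (β • (z * u) + v * y) := by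
  replace hy := mul_eq_of_qComm_eq hy
  replace hz := mul_eq_of_qComm_eq hz
  have hyz : x * (y * z) = (α * β) • (y * z * x) + α • (y * v) + u * z := by
    rw [← mul_assoc, hy, add_mul, smul_mul_assoc, mul_assoc, hz, mul_add, mul_smul_comm,
      smul_add, smul_smul, mul_assoc]
  have hzy : x * (z * y) = (α * β) • (z * y * x) + β • (z * u) + v * y := by
    rw [← mul_assoc, hz, add_mul, smul_mul_assoc, mul_assoc, hy, mul_add, mul_smul_comm,
      smul_add, smul_smul, mul_comm β, mul_assoc]
  rw [qComm, qComm, mul_sub, mul_smul_comm, hyz, hzy, sub_mul, smul_mul_assoc]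
  module

theorem qComm_qComm_left {α β c : R} {x y z u v : A}
    (hx : qComm α x z = u) (hy : qComm β y z = v) :
    qComm (α * β) (qComm c x y) z = β • (u * y) + x * v - c • (α • (v * x) + y * u) := by
  replace hx := mul_eq_of_qComm_eq hx
  replace hy := mul_eq_of_qComm_eq hy
  have hxy : x * y * z = (α * β) • (z * (x * y)) + β • (u * y) + x * v := by
    rw [mul_assoc, hy, mul_add, mul_smul_comm, ← mul_assoc, hx, add_mul, smul_mul_assoc,
      smul_add, smul_smul, mul_comm β, mul_assoc]
  have hyx : y * x * z = (α * β) • (z * (y * x)) + α • (v * x) + y * u := by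
    rw [mul_assoc, hx, mul_add, mul_smul_comm, ← mul_assoc, hy, add_mul, smul_mul_assoc,
      smul_add, smul_smul, mul_assoc]
  rw [qComm, qComm, sub_mul, smul_mul_assoc, hxy, hyx, mul_sub, mul_smul_comm]
  module

end

section

variable {𝕜 A : Type*} [Field 𝕜] [Ring A] [Algebra 𝕜 A] {p11 p12 p21 p22 : 𝕜}
  {a1 a2 b1 b2 h1 h2 : A}

theorem qComm_a1_qComm_b2_b1 (hp12 : p12 ≠ 0) (r11 : qComm p11 a1 b1 = 1 - h1)
    (r12 : qComm p21 a1 b2 = 0) (h1b2 : h1 * b2 = (p12 * p21) • (b2 * h1)) :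
    qComm (p21 * p11) a1 (qComm p12⁻¹ b2 b1) = (p21 - p12⁻¹) • b2 := by
  rw [qComm_qComm_right r12 r11]
  simp only [mul_sub, sub_mul, mul_one, one_mul, zero_mul, mul_zero, h1b2, smul_zero, zero_add,
    add_zero]
  match_scalars <;> simp [hp12]

theorem qComm_a2_qComm_b2_b1 (hp12 : p12 ≠ 0) (r21 : qComm p12 a2 b1 = 0)
    (r22 : qComm p22 a2 b2 = 1 - h2) (h2b1 : h2 * b1 = (p21 * p12) • (b1 * h2)) :
    qComm (p22 * p12) a2 (qComm p12⁻¹ b2 b1) = (1 - p21 * p12) • (b1 * h2) := by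
  rw [qComm_qComm_right r22 r21]
  simp only [mul_sub, sub_mul, mul_one, one_mul, zero_mul, mul_zero, h2b1, smul_zero, zero_add,
    add_zero]
  match_scalars <;> field_simp <;> ring

end

theorem stmt1_general
    (𝕜 : Type) [Field 𝕜] (p11 p12 p21 p22 : 𝕜)
    (hp12 : p12 ≠ 0) (hp21 : p21 ≠ 0)
    (A : Type) [Ring A] [Algebra 𝕜 A]
    (a1 a2 b1 b2 h1 h2 : A)
    (r11 : a1 * b1 - p11 • (b1 * a1) = 1 - h1)
    (r12 : a1 * b2 - p21 • (b2 * a1) = 0)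
    (r21 : a2 * b1 - p12 • (b1 * a2) = 0)
    (r22 : a2 * b2 - p22 • (b2 * a2) = 1 - h2)
    (h2a1 : h2 * a1 = (p21 * p12)⁻¹ • (a1 * h2))
    (h1b2 : h1 * b2 = (p12 * p21) • (b2 * h1))
    (h2b1 : h2 * b1 = (p21 * p12) • (b1 * h2)) :
    (a1 * a2 - p12 • (a2 * a1)) * (b2 * b1 - p12⁻¹ • (b1 * b2))
      - (p11 * p12 * p21 * p22) •
        ((b2 * b1 - p12⁻¹ • (b1 * b2)) * (a1 * a2 - p12 • (a2 * a1)))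
    = (1 - p12 * p21) • ((1 : A) - h1 * h2) := by
  have hq : p11 * p12 * p21 * p22 = p21 * p11 * (p22 * p12) := by ring
  change qComm _ (qComm p12 a1 a2) (qComm p12⁻¹ b2 b1) = _
  rw [hq, qComm_qComm_left (qComm_a1_qComm_b2_b1 hp12 r11 r12 h1b2)
    (qComm_a2_qComm_b2_b1 hp12 r21 r22 h2b1)]
  have ha1b1 := mul_eq_of_qComm_eq r11
  have ha2b2 := mul_eq_of_qComm_eq r22
  have hb1h2a1 : b1 * h2 * a1 = (p21 * p12)⁻¹ • (b1 * a1 * h2) := by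
    rw [mul_assoc, h2a1, mul_smul_comm, ← mul_assoc]
  simp only [smul_mul_assoc, mul_smul_comm, ← mul_assoc, add_mul, sub_mul, one_mul, ha1b1, ha2b2,
    hb1h2a1]
  match_scalars <;> field_simp <;> ring

/-- Lemma 2.3 of the paper, abstracted.
Under the hypotheses on `a_1, a_2, b_1, b_2, h_1, h_2` one has
`[[x_1,x_2],[x_2⁻,x_1⁻]] = (1 − p_{12}p_{21})(1 − g_1g_2f_1f_2)`, i.e.
`(a_1a_2 − p_{12}a_2a_1)(b_2b_1 − p_{12}⁻¹ b_1b_2)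
  − p_{11}p_{12}p_{21}p_{22}·(b_2b_1 − p_{12}⁻¹ b_1b_2)(a_1a_2 − p_{12}a_2a_1)
  = (1 − p_{12}p_{21})·(1 − h_1h_2)`. -/
theorem stmt1
    (𝕜 : Type) [Field 𝕜] (p11 p12 p21 p22 : 𝕜)
    (hp11 : p11 ≠ 0) (hp12 : p12 ≠ 0) (hp21 : p21 ≠ 0) (hp22 : p22 ≠ 0)
    (A : Type) [Ring A] [Algebra 𝕜 A]
    (a1 a2 b1 b2 h1 h2 : A)
    (r11 : a1 * b1 - p11 • (b1 * a1) = 1 - h1)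
    (r12 : a1 * b2 - p21 • (b2 * a1) = 0)
    (r21 : a2 * b1 - p12 • (b1 * a2) = 0)
    (r22 : a2 * b2 - p22 • (b2 * a2) = 1 - h2)
    (h1a1 : h1 * a1 = (p11 * p11)⁻¹ • (a1 * h1))
    (h1a2 : h1 * a2 = (p12 * p21)⁻¹ • (a2 * h1))
    (h2a1 : h2 * a1 = (p21 * p12)⁻¹ • (a1 * h2))
    (h2a2 : h2 * a2 = (p22 * p22)⁻¹ • (a2 * h2))
    (h1b1 : h1 * b1 = (p11 * p11) • (b1 * h1))
    (h1b2 : h1 * b2 = (p12 * p21) • (b2 * h1))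
    (h2b1 : h2 * b1 = (p21 * p12) • (b1 * h2))
    (h2b2 : h2 * b2 = (p22 * p22) • (b2 * h2))
    (hcomm : h1 * h2 = h2 * h1) :
    (a1 * a2 - p12 • (a2 * a1)) * (b2 * b1 - p12⁻¹ • (b1 * b2))
      - (p11 * p12 * p21 * p22) •
        ((b2 * b1 - p12⁻¹ • (b1 * b2)) * (a1 * a2 - p12 • (a2 * a1)))
    = (1 - p12 * p21) • ((1 : A) - h1 * h2) :=
  stmt1_general 𝕜 p11 p12 p21 p22 hp12 hp21 A a1 a2 b1 b2 h1 h2 r11 r12 r21 r22 h2a1 h1b2 h2b1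
end

section
/- Let 1 ≤ k ≤ n < m ≤ 2n and let S ⊆ [k,m). Then S is white (k,m)-regular if and only if the set ψ(S)−1 := {ψ(s)−1 : s ∈ S} is white (ψ(m),ψ(k))-regular, and S is black (k,m)-regular if and only if ψ(S)−1 is black (ψ(m),ψ(k))-regular. -/
namespace Kh

/-- `ψ(a) = 2n − a + 1`. -/
def psi (n a : ℕ) : ℕ := 2 * n - a + 1

/-- White `(k,m)`-regularity of a set `S`: if `k ≤ n < m` then for every `i` with
`k−1 ≤ i < m` and `k ≤ ψ(i) ≤ m+1`, at least one of `i`, `ψ(i)−1` does not belong to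
`S ∪ {k−1, m}`; if `m ≤ n` or `k > n` the condition is vacuous. -/
def whiteReg (n : ℕ) (S : Set ℕ) (k m : ℕ) : Prop :=
  k ≤ n → n < m →
    ∀ i, k - 1 ≤ i → i < m → k ≤ psi n i → psi n i ≤ m + 1 →
      i ∉ S ∪ {k - 1, m} ∨ psi n i - 1 ∉ S ∪ {k - 1, m}

/-- Black `(k,m)`-regularity of a set `S`: if `k ≤ n < m` then for every `i` with
`k ≤ i ≤ m` and `k ≤ ψ(i) ≤ m+1`, at least one of `i`, `ψ(i)−1` belongs to
`S ∖ {k−1, m}`; if `m ≤ n` or `k > n` the condition is vacuous. -/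
def blackReg (n : ℕ) (S : Set ℕ) (k m : ℕ) : Prop :=
  k ≤ n → n < m →
    ∀ i, k ≤ i → i ≤ m → k ≤ psi n i → psi n i ≤ m + 1 →
      i ∈ S \ {k - 1, m} ∨ psi n i - 1 ∈ S \ {k - 1, m}

/-- `(k,m)`-regularity: white or black `(k,m)`-regular. -/
def isReg (n : ℕ) (S : Set ℕ) (k m : ℕ) : Prop :=
  whiteReg n S k m ∨ blackReg n S k m

/-- `a` is a white label of the scheme of `(S,k,m)`. -/
def whiteLabel (S : Set ℕ) (k m a : ℕ) : Prop :=
  a = k - 1 ∨ (k ≤ a ∧ a < m ∧ a ∉ S)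

/-- `a` is a black label of the scheme of `(S,k,m)`. -/
def blackLabel (S : Set ℕ) (k m a : ℕ) : Prop :=
  a = m ∨ (k ≤ a ∧ a < m ∧ a ∈ S)

/-- The superposed scheme of `(S,k,m)` and `(T,i,j)` is balanced: there are no labels
`t < s` with `t` white on both schemes and `s` black on both schemes. -/
def balanced (S : Set ℕ) (k m : ℕ) (T : Set ℕ) (i j : ℕ) : Prop :=
  ¬ ∃ t s, t < s ∧ whiteLabel S k m t ∧ whiteLabel T i j t ∧
    blackLabel S k m s ∧ blackLabel T i j s

/-- The pair `(S,k,m)`, `(T,i,j)` has form (★): `k = i`, `m = j`, and every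
intermediate label belongs to exactly one of `S`, `T`. -/
def formStar (S : Set ℕ) (k m : ℕ) (T : Set ℕ) (i j : ℕ) : Prop :=
  k = i ∧ m = j ∧ ∀ a, k ≤ a → a < m → Xor' (a ∈ S) (a ∈ T)

/-- The dual set `S* = [ψ(m),ψ(k)) ∖ {ψ(s)−1 : s ∈ S}`. -/
def starSet (n : ℕ) (S : Set ℕ) (k m : ℕ) : Set ℕ :=
  Set.Ico (psi n m) (psi n k) \ ((fun s => psi n s - 1) '' S)

/-- The superposed scheme of `(S,k,m)` and `(T,i,j)` is strongly white: no label is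
black on both schemes, `k ≠ i`, and whenever `[max(k,i)−1, min(m,j)]` contains at
least two labels, the label `max(k,i)−1` is white on both schemes. -/
def stronglyWhite (S : Set ℕ) (k m : ℕ) (T : Set ℕ) (i j : ℕ) : Prop :=
  (¬ ∃ a, blackLabel S k m a ∧ blackLabel T i j a) ∧ k ≠ i ∧
    (max k i - 1 < min m j →
      whiteLabel S k m (max k i - 1) ∧ whiteLabel T i j (max k i - 1))

/-- The superposed scheme of `(S,k,m)` and `(T,i,j)` is strongly black: no label is
white on both schemes, `m ≠ j`, and whenever `[max(k,i)−1, min(m,j)]` contains at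
least two labels, the label `min(m,j)` is black on both schemes. -/
def stronglyBlack (S : Set ℕ) (k m : ℕ) (T : Set ℕ) (i j : ℕ) : Prop :=
  (¬ ∃ a, whiteLabel S k m a ∧ whiteLabel T i j a) ∧ m ≠ j ∧
    (max k i - 1 < min m j →
      blackLabel S k m (min m j) ∧ blackLabel T i j (min m j))

/-- The superposed scheme is strong: strongly white or strongly black. -/
def strong (S : Set ℕ) (k m : ℕ) (T : Set ℕ) (i j : ℕ) : Prop :=
  stronglyWhite S k m T i j ∨ stronglyBlack S k m T i j

/-!
Since `ψ(a) − 1 = 2n − a`, both regularity conditions only involve pairs `{i, 2n − i}`.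
Because `S ⊆ [k, m)` and `k ≤ n < m`, white regularity says exactly that
`S ∪ {k − 1, m}` contains no two numbers summing to `2n`, and black regularity says the same
of `[k − 1, m] ∖ S`. The reflection `a ↦ 2n − a` maps each of these sets for `(S, k, m)` onto
the corresponding set for `(ψ(S) − 1, ψ(m), ψ(k))`, and it preserves the pairs summing to `2n`.
-/

open Set

lemma psi_sub_one (n a : ℕ) : psi n a - 1 = 2 * n - a := by
  simp only [psi, Nat.add_sub_cancel]

def NoPairSumsTo (c : ℕ) (A : Set ℕ) : Prop := ∀ i ∈ A, ∀ j ∈ A, i + j ≠ c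

lemma noPairSumsTo_congr_reflect {c : ℕ} {A B : Set ℕ} (h : ∀ a ≤ c, a ∈ B ↔ c - a ∈ A) :
    NoPairSumsTo c A ↔ NoPairSumsTo c B := by
  constructor
  · intro hA i hi j hj hij
    refine hA (c - i) ((h i (by omega)).1 hi) (c - j) ((h j (by omega)).1 hj) (by omega)
  · intro hB i hi j hj hij
    have hi' : c - i ∈ B := (h (c - i) (by omega)).2 (by rwa [Nat.sub_sub_self (by omega)])
    have hj' : c - j ∈ B := (h (c - j) (by omega)).2 (by rwa [Nat.sub_sub_self (by omega)])
    exact hB _ hi' _ hj' (by omega)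

section

variable {n k m : ℕ} {S : Set ℕ}

lemma whiteReg_iff_noPairSumsTo (hkn : k ≤ n) (hnm : n < m) (hm : m ≤ 2 * n)
    (hS : S ⊆ Ico k m) : whiteReg n S k m ↔ NoPairSumsTo (2 * n) (S ∪ {k - 1, m}) := by
  have hU : ∀ a ∈ S ∪ {k - 1, m}, k - 1 ≤ a ∧ a ≤ m := by
    rintro a (ha | rfl | rfl)
    · have := hS ha; simp only [mem_Ico] at this; omega
    all_goals omega
  constructor
  · intro hW
    -- the smaller element `i ≤ n` of the pair is the one the white condition quantifies over
    suffices ∀ i ∈ S ∪ {k - 1, m}, ∀ j ∈ S ∪ {k - 1, m}, i + j = 2 * n → i ≤ j → False by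
      intro i hi j hj hij
      rcases le_total i j with h | h
      · exact this i hi j hj hij h
      · exact this j hj i hi (by omega) h
    intro i hi j hj hij hle
    obtain ⟨hi₁, -⟩ := hU i hi
    obtain ⟨hj₁, hj₂⟩ := hU j hj
    have hψ : psi n i - 1 = j := by rw [psi_sub_one]; omega
    rcases hW hkn hnm i hi₁ (by omega) (by simp only [psi]; omega)
      (by simp only [psi]; omega) with h | h
    · exact h hi
    · exact h (hψ ▸ hj)
  · intro hP _ _ i _ hi _ _
    by_contra! h
    exact hP i h.1 _ h.2 (by rw [psi_sub_one]; omega)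

lemma blackReg_iff_noPairSumsTo (hk : 1 ≤ k) (hkn : k ≤ n) (hnm : n < m) (hm : m ≤ 2 * n)
    (hS : S ⊆ Ico k m) : blackReg n S k m ↔ NoPairSumsTo (2 * n) (Icc (k - 1) m \ S) := by
  have hSdiff : S \ {k - 1, m} = S := by
    refine sdiff_eq_self_iff_disjoint.2 (disjoint_right.2 fun a ha ha' => ?_)
    have := hS ha
    simp only [mem_Ico, mem_insert_iff, mem_singleton_iff] at this ha'
    omega
  simp only [blackReg, hSdiff]
  constructor
  · intro hB
    -- the larger element `i ≥ n` of the pair is the one the black condition quantifies over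
    suffices ∀ i ∈ Icc (k - 1) m \ S, ∀ j ∈ Icc (k - 1) m \ S, i + j = 2 * n → j ≤ i → False by
      intro i hi j hj hij
      rcases le_total j i with h | h
      · exact this i hi j hj hij h
      · exact this j hj i hi (by omega) h
    rintro i ⟨⟨-, hi₂⟩, hi⟩ j ⟨⟨hj₁, hj₂⟩, hj⟩ hij hle
    have hψ : psi n i - 1 = j := by rw [psi_sub_one]; omega
    rcases hB hkn hnm i (by omega) hi₂ (by simp only [psi]; omega)
      (by simp only [psi]; omega) with h | h
    · exact hi h
    · exact hj (hψ ▸ h)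
  · intro hP _ _ i hi₁ hi₂ hψ₁ hψ₂
    rw [psi_sub_one]
    by_contra! h
    simp only [psi] at hψ₁ hψ₂
    exact hP i ⟨⟨by omega, hi₂⟩, h.1⟩ _ ⟨⟨by omega, by omega⟩, h.2⟩ (by omega)

lemma mem_image_psi_sub_one_iff (hS : S ⊆ Iic (2 * n)) {a : ℕ} (ha : a ≤ 2 * n) :
    a ∈ (fun s => psi n s - 1) '' S ↔ 2 * n - a ∈ S := by
  simp only [psi_sub_one, mem_image]
  constructor
  · rintro ⟨s, hs, rfl⟩
    rwa [Nat.sub_sub_self (hS hs)]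
  · exact fun h => ⟨2 * n - a, h, Nat.sub_sub_self ha⟩

lemma image_psi_sub_one_subset (hm : m ≤ 2 * n) (hS : S ⊆ Ico k m) :
    (fun s => psi n s - 1) '' S ⊆ Ico (psi n m) (psi n k) := by
  rintro _ ⟨s, hs, rfl⟩
  have := hS hs
  simp only [mem_Ico, psi] at this ⊢
  omega

end

theorem stmt9_general (n k m : ℕ) (hk : 1 ≤ k) (hkn : k ≤ n) (hnm : n < m)
    (hm : m ≤ 2 * n) (S : Set ℕ) (hS : S ⊆ Set.Ico k m) :
    (whiteReg n S k m ↔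
      whiteReg n ((fun s => psi n s - 1) '' S) (psi n m) (psi n k)) ∧
    (blackReg n S k m ↔
      blackReg n ((fun s => psi n s - 1) '' S) (psi n m) (psi n k)) := by
  have hk' : 1 ≤ psi n m := Nat.le_add_left 1 _
  have hkn' : psi n m ≤ n := by simp only [psi]; omega
  have hnm' : n < psi n k := by simp only [psi]; omega
  have hm' : psi n k ≤ 2 * n := by simp only [psi]; omega
  have hS' := image_psi_sub_one_subset hm hS
  have hS₂ : S ⊆ Iic (2 * n) := fun _ hs => ((hS hs).2.le.trans hm : _)
  refine ⟨?_, ?_⟩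
  · rw [whiteReg_iff_noPairSumsTo hkn hnm hm hS, whiteReg_iff_noPairSumsTo hkn' hnm' hm' hS']
    refine noPairSumsTo_congr_reflect fun a ha => ?_
    simp only [mem_union, mem_insert_iff, mem_singleton_iff, mem_image_psi_sub_one_iff hS₂ ha]
    exact or_congr_right (by simp only [psi]; omega)
  · rw [blackReg_iff_noPairSumsTo hk hkn hnm hm hS,
      blackReg_iff_noPairSumsTo hk' hkn' hnm' hm' hS']
    refine noPairSumsTo_congr_reflect fun a ha => ?_
    simp only [mem_sdiff, mem_Icc, mem_image_psi_sub_one_iff hS₂ ha]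
    exact and_congr_left' (by simp only [psi]; omega)

/-- Lemma `dop1`. For `1 ≤ k ≤ n < m ≤ 2n` and `S ⊆ [k,m)`:
`S` is white (black) `(k,m)`-regular iff `ψ(S)−1 = {ψ(s)−1 : s ∈ S}` is white (black)
`(ψ(m),ψ(k))`-regular. -/
theorem stmt9 (n k m : ℕ) (hn : 1 ≤ n) (hk : 1 ≤ k) (hkn : k ≤ n) (hnm : n < m)
    (hm : m ≤ 2 * n) (S : Set ℕ) (hS : S ⊆ Set.Ico k m) :
    (whiteReg n S k m ↔
      whiteReg n ((fun s => psi n s - 1) '' S) (psi n m) (psi n k)) ∧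
    (blackReg n S k m ↔
      blackReg n ((fun s => psi n s - 1) '' S) (psi n m) (psi n k)) :=
  stmt9_general n k m hk hkn hnm hm S hS

end Kh
end

section
/- Let n ≥ 1, 1 ≤ k ≤ m ≤ 2n, 1 ≤ i ≤ j ≤ 2n, S ⊆ [k,m), T ⊆ [i,j). Then: (1) the ST-scheme is balanced if and only if the S*T*-scheme is balanced; (2) the ST*-scheme is balanced if and only if the S*T-scheme is balanced; (3) the pair (S,k,m), (T,i,j) has form (★) if and only if the pair (S*,ψ(m),ψ(k)), (T*,ψ(j),ψ(i)) has form (★); (4) the pair (S,k,m), (T*,ψ(j),ψ(i)) has form (★) if and only if the pair (S*,ψ(m),ψ(k)), (T,i,j) has form (★). -/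
namespace Kh

/-! The reflection `a ↦ 2n − a = ψ(a) − 1` maps the labels `[k−1, m]` of the scheme of `(S,k,m)`
onto the labels `[ψ(m)−1, ψ(k)]` of the scheme of `(S*,ψ(m),ψ(k))`, exchanging the two colours.
Since it reverses the order, a pair "white `t` < black `s`" on both schemes of one superposition
becomes such a pair `2n − s < 2n − t` on the other, and the exclusive-or defining form (★) survives
the simultaneous complementation. As `S ↦ S*` is an involution, one implication gives each
equivalence. -/

theorem blackLabel_le {S : Set ℕ} {k m a : ℕ} (h : blackLabel S k m a) : a ≤ m := by
  rcases h with rfl | ⟨-, h, -⟩ <;> omega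

theorem psi_psi {n a : ℕ} (ha : 1 ≤ a) (ha' : a ≤ 2 * n) : psi n (psi n a) = a := by
  unfold psi; omega

structure IsScheme (n : ℕ) (S : Set ℕ) (k m : ℕ) : Prop where
  one_le : 1 ≤ k
  le : k ≤ m
  le_two_mul : m ≤ 2 * n
  subset : S ⊆ Set.Ico k m

namespace IsScheme

variable {n k m i j : ℕ} {S T : Set ℕ}

theorem psi_psi_left (h : IsScheme n S k m) : psi n (psi n k) = k :=
  psi_psi h.one_le (h.le.trans h.le_two_mul)

theorem psi_psi_right (h : IsScheme n S k m) : psi n (psi n m) = m :=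
  psi_psi (h.one_le.trans h.le) h.le_two_mul

theorem mem_starSet (h : IsScheme n S k m) {b : ℕ} :
    b ∈ starSet n S k m ↔ b ∈ Set.Ico (psi n m) (psi n k) ∧ 2 * n - b ∉ S := by
  have := h.one_le; have := h.le; have := h.le_two_mul
  simp only [starSet, Set.mem_sdiff, Set.mem_Ico, Set.mem_image, psi, not_exists, not_and]
  constructor
  · rintro ⟨hb, hbS⟩
    exact ⟨hb, fun hs => hbS _ hs (by omega)⟩
  · rintro ⟨hb, hbS⟩
    refine ⟨hb, fun s hs hsb => hbS ?_⟩
    have := (h.subset hs).2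
    rwa [show 2 * n - b = s by omega]

theorem starSet (h : IsScheme n S k m) :
    IsScheme n (starSet n S k m) (psi n m) (psi n k) where
  one_le := Nat.succ_pos _
  le := by have := h.le; unfold psi; omega
  le_two_mul := by have := h.one_le; have := h.le; have := h.le_two_mul; unfold psi; omega
  subset := Set.sdiff_subset

theorem starSet_starSet (h : IsScheme n S k m) :
    Kh.starSet n (Kh.starSet n S k m) (psi n m) (psi n k) = S := by
  have := h.one_le; have := h.le; have := h.le_two_mul
  ext b
  rw [h.starSet.mem_starSet, h.mem_starSet, h.psi_psi_left, h.psi_psi_right]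
  by_cases hb : b ∈ Set.Ico k m
  · have hb' : 2 * n - b ∈ Set.Ico (psi n m) (psi n k) := by
      simp only [Set.mem_Ico, psi] at hb ⊢; omega
    rw [show 2 * n - (2 * n - b) = b by have := hb.2; omega]
    simp only [hb, hb', true_and, not_not]
  · exact iff_of_false (fun hb' => hb hb'.1) (fun hbS => hb (h.subset hbS))

theorem blackLabel_of_whiteLabel_starSet (h : IsScheme n S k m) {a : ℕ}
    (ha : whiteLabel (Kh.starSet n S k m) (psi n m) (psi n k) a) :
    blackLabel S k m (2 * n - a) := by
  have := h.le_two_mul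
  rcases ha with rfl | ⟨ha1, ha2, ha⟩
  · left; unfold psi; omega
  · rw [h.mem_starSet, not_and_not_right] at ha
    have hS := ha ⟨ha1, ha2⟩
    exact Or.inr ⟨(h.subset hS).1, (h.subset hS).2, hS⟩

theorem whiteLabel_of_blackLabel_starSet (h : IsScheme n S k m) {a : ℕ}
    (ha : blackLabel (Kh.starSet n S k m) (psi n m) (psi n k) a) :
    whiteLabel S k m (2 * n - a) := by
  have := h.one_le; have := h.le; have := h.le_two_mul
  rcases ha with rfl | ⟨ha1, ha2, ha⟩
  · left; unfold psi; omega
  · have hS := (h.mem_starSet.1 ha).2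
    unfold psi at ha1 ha2
    exact Or.inr ⟨by omega, by omega, hS⟩

theorem starSet_iff_of_imp {R : Set ℕ → ℕ → ℕ → Set ℕ → ℕ → ℕ → Prop}
    (hR : ∀ {S k m T i j}, IsScheme n S k m → IsScheme n T i j → R S k m T i j →
      R (Kh.starSet n S k m) (psi n m) (psi n k) (Kh.starSet n T i j) (psi n j) (psi n i))
    (hS : IsScheme n S k m) (hT : IsScheme n T i j) :
    R (Kh.starSet n S k m) (psi n m) (psi n k) (Kh.starSet n T i j) (psi n j) (psi n i) ↔
      R S k m T i j := by
  refine ⟨fun h => ?_, hR hS hT⟩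
  have := hR hS.starSet hT.starSet h
  rwa [hS.starSet_starSet, hT.starSet_starSet, hS.psi_psi_left, hS.psi_psi_right,
    hT.psi_psi_left, hT.psi_psi_right] at this

theorem balanced_starSet (hS : IsScheme n S k m) (hT : IsScheme n T i j)
    (h : balanced S k m T i j) :
    balanced (Kh.starSet n S k m) (psi n m) (psi n k) (Kh.starSet n T i j) (psi n j) (psi n i) := by
  rintro ⟨t, s, hts, htS, htT, hsS, hsT⟩
  have := blackLabel_le hsS; have := hS.starSet.le_two_mul
  exact h ⟨2 * n - s, 2 * n - t, by omega,
    hS.whiteLabel_of_blackLabel_starSet hsS, hT.whiteLabel_of_blackLabel_starSet hsT,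
    hS.blackLabel_of_whiteLabel_starSet htS, hT.blackLabel_of_whiteLabel_starSet htT⟩

theorem formStar_starSet (hS : IsScheme n S k m) (hT : IsScheme n T i j)
    (h : formStar S k m T i j) :
    formStar (Kh.starSet n S k m) (psi n m) (psi n k) (Kh.starSet n T i j) (psi n j) (psi n i) := by
  obtain ⟨rfl, rfl, hxor⟩ := h
  refine ⟨rfl, rfl, fun b hb1 hb2 => ?_⟩
  have hb : b ∈ Set.Ico (psi n m) (psi n k) := ⟨hb1, hb2⟩
  have := hS.one_le; have := hS.le_two_mul
  unfold psi at hb1 hb2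
  simp only [hS.mem_starSet, hT.mem_starSet, hb, true_and]
  exact xor_not_not.2 (hxor (2 * n - b) (by omega) (by omega))

end IsScheme

theorem stmt12_general (n k m i j : ℕ) (hk : 1 ≤ k) (hkm : k ≤ m)
    (hm : m ≤ 2 * n) (hi : 1 ≤ i) (hij : i ≤ j) (hj : j ≤ 2 * n)
    (S T : Set ℕ) (hS : S ⊆ Set.Ico k m) (hT : T ⊆ Set.Ico i j) :
    (balanced S k m T i j ↔
      balanced (starSet n S k m) (psi n m) (psi n k)
        (starSet n T i j) (psi n j) (psi n i)) ∧
    (balanced S k m (starSet n T i j) (psi n j) (psi n i) ↔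
      balanced (starSet n S k m) (psi n m) (psi n k) T i j) ∧
    (formStar S k m T i j ↔
      formStar (starSet n S k m) (psi n m) (psi n k)
        (starSet n T i j) (psi n j) (psi n i)) ∧
    (formStar S k m (starSet n T i j) (psi n j) (psi n i) ↔
      formStar (starSet n S k m) (psi n m) (psi n k) T i j) := by
  have hS : IsScheme n S k m := ⟨hk, hkm, hm, hS⟩
  have hT : IsScheme n T i j := ⟨hi, hij, hj, hT⟩
  have balanced_mixed := IsScheme.starSet_iff_of_imp IsScheme.balanced_starSet hS hT.starSet
  have formStar_mixed := IsScheme.starSet_iff_of_imp IsScheme.formStar_starSet hS hT.starSet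
  rw [hT.starSet_starSet, hT.psi_psi_left, hT.psi_psi_right] at balanced_mixed formStar_mixed
  exact ⟨(IsScheme.starSet_iff_of_imp IsScheme.balanced_starSet hS hT).symm,
    balanced_mixed.symm,
    (IsScheme.starSet_iff_of_imp IsScheme.formStar_starSet hS hT).symm,
    formStar_mixed.symm⟩

/-- Lemma `bal2`. The `ST`-scheme is balanced iff the `S*T*`-scheme
is balanced; the `ST*`-scheme is balanced iff the `S*T`-scheme is balanced; and
similarly for form (★). -/
theorem stmt12 (n k m i j : ℕ) (hn : 1 ≤ n) (hk : 1 ≤ k) (hkm : k ≤ m)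
    (hm : m ≤ 2 * n) (hi : 1 ≤ i) (hij : i ≤ j) (hj : j ≤ 2 * n)
    (S T : Set ℕ) (hS : S ⊆ Set.Ico k m) (hT : T ⊆ Set.Ico i j) :
    (balanced S k m T i j ↔
      balanced (starSet n S k m) (psi n m) (psi n k)
        (starSet n T i j) (psi n j) (psi n i)) ∧
    (balanced S k m (starSet n T i j) (psi n j) (psi n i) ↔
      balanced (starSet n S k m) (psi n m) (psi n k) T i j) ∧
    (formStar S k m T i j ↔
      formStar (starSet n S k m) (psi n m) (psi n k)
        (starSet n T i j) (psi n j) (psi n i)) ∧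
    (formStar S k m (starSet n T i j) (psi n j) (psi n i) ↔
      formStar (starSet n S k m) (psi n m) (psi n k) T i j) :=
  stmt12_general n k m i j hk hkm hm hi hij hj S T hS hT

end Kh
end
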